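/- arXiv:2101.07354 — 2 statements merged into one kernel-verified Lean document; each statement's English description precedes it below -/
import Mathlib

section
/- Let P ∈ R^{n×n} be a symmetric matrix with all entries satisfying c_0 ≤ p_{ij} ≤ c_1 for constants 0 < c_0 ≤ c_1, let p_i = Σ_j p_{ij}, D_P = diag(p_1,...,p_n), and W = P D_P^{-1}. Then for every positive integer t and all indices i, j, the (i,j) entry of W^t satisfies c_0^t / (c_1^t · n) ≤ (W^t)_{ij} ≤ c_1^t / (c_0^t · n). -/
/-- If `P` is symmetric with entries in `[c₀, c₁]`, `0 < c₀ ≤ c₁`, `p_i = Σ_j p_{ij}`,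
`W = P D_P⁻¹`, then every entry of `W^t` lies in `[c₀^t/(c₁^t n), c₁^t/(c₀^t n)]`. -/
theorem stmt2 (n : ℕ) (hn : 0 < n) (c0 c1 : ℝ) (hc0 : 0 < c0) (hcc : c0 ≤ c1)
    (P : Matrix (Fin n) (Fin n) ℝ) (hsym : P.IsSymm)
    (hlb : ∀ i j, c0 ≤ P i j) (hub : ∀ i j, P i j ≤ c1)
    (p : Fin n → ℝ) (hp : ∀ i, p i = ∑ j, P i j)
    (t : ℕ) (ht : 0 < t) (i j : Fin n) :
    c0 ^ t / (c1 ^ t * n) ≤ ((P * Matrix.diagonal (fun k => (p k)⁻¹)) ^ t) i j ∧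
      ((P * Matrix.diagonal (fun k => (p k)⁻¹)) ^ t) i j ≤ c1 ^ t / (c0 ^ t * n) := by
  set W := P * Matrix.diagonal (fun k => (p k)⁻¹) with hW
  have hc1 : (0:ℝ) < c1 := hc0.trans_le hcc
  have hnR : (0:ℝ) < (n:ℝ) := by exact_mod_cast hn
  -- bounds on p
  have hplb : ∀ k, c0 * n ≤ p k := by
    intro k
    rw [hp k]
    calc c0 * n = ∑ _j : Fin n, c0 := by
          simp [Finset.sum_const, mul_comm]
      _ ≤ ∑ j, P k j := Finset.sum_le_sum fun j _ => hlb k j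
  have hpub : ∀ k, p k ≤ c1 * n := by
    intro k
    rw [hp k]
    calc ∑ j, P k j ≤ ∑ _j : Fin n, c1 := Finset.sum_le_sum fun j _ => hub k j
      _ = c1 * n := by simp [Finset.sum_const, mul_comm]
  have hppos : ∀ k, 0 < p k := fun k => lt_of_lt_of_le (by positivity) (hplb k)
  -- entry formula for W
  have hWentry : ∀ a b, W a b = P a b / p b := by
    intro a b
    rw [hW, Matrix.mul_diagonal, div_eq_mul_inv]
  -- entry bounds for W
  have hWlb : ∀ a b, c0 / (c1 * n) ≤ W a b := by
    intro a b
    rw [hWentry]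
    exact div_le_div₀ ((hc0.le.trans (hlb a b))) (hlb a b) (hppos b) (hpub b)
  have hWub : ∀ a b, W a b ≤ c1 / (c0 * n) := by
    intro a b
    rw [hWentry]
    exact div_le_div₀ hc1.le (hub a b) (by positivity) (hplb b)
  have hWnn : ∀ a b, 0 ≤ W a b := fun a b =>
    le_trans (by positivity) (hWlb a b)
  -- column sums of W are 1
  have hWcol : ∀ b, ∑ a, W a b = 1 := by
    intro b
    have hsum : ∑ a, P a b = p b := by
      rw [hp b]
      exact Finset.sum_congr rfl fun a _ => (hsym.apply b a)
    rw [Finset.sum_congr rfl fun a _ => hWentry a b, ← Finset.sum_div, hsum,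
      div_self (hppos b).ne']
  -- W^s is nonnegative with column sums 1
  have key : ∀ s : ℕ, (∀ a b, 0 ≤ (W ^ s) a b) ∧ (∀ b, ∑ a, (W ^ s) a b = 1) := by
    intro s
    induction s with
    | zero =>
      constructor
      · intro a b
        simp [Matrix.one_apply]
        split <;> norm_num
      · intro b
        simp [Matrix.one_apply]
    | succ s ih =>
      have hpow : W ^ (s + 1) = W * W ^ s := by rw [pow_succ']
      constructor
      · intro a b
        rw [hpow, Matrix.mul_apply]
        exact Finset.sum_nonneg fun k _ => mul_nonneg (hWnn a k) (ih.1 k b)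
      · intro b
        rw [hpow]
        calc ∑ a, (W * W ^ s) a b = ∑ a, ∑ k, W a k * (W ^ s) k b := by
              simp [Matrix.mul_apply]
          _ = ∑ k, (∑ a, W a k) * (W ^ s) k b := by
              rw [Finset.sum_comm]
              simp [Finset.sum_mul]
          _ = ∑ k, (W ^ s) k b := by
              refine Finset.sum_congr rfl fun k _ => ?_
              rw [hWcol k, one_mul]
          _ = 1 := ih.2 b
  -- main bound for W^t with t = s+1
  obtain ⟨s, rfl⟩ : ∃ s, t = s + 1 := ⟨t - 1, (Nat.succ_pred_eq_of_pos ht).symm⟩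
  have hpow : W ^ (s + 1) = W * W ^ s := by rw [pow_succ']
  have hentry : (W ^ (s + 1)) i j = ∑ k, W i k * (W ^ s) k j := by
    rw [hpow, Matrix.mul_apply]
  have hlow : c0 / (c1 * n) ≤ (W ^ (s + 1)) i j := by
    rw [hentry]
    calc c0 / (c1 * n) = ∑ k, c0 / (c1 * n) * (W ^ s) k j := by
          rw [← Finset.mul_sum, (key s).2 j, mul_one]
      _ ≤ ∑ k, W i k * (W ^ s) k j :=
          Finset.sum_le_sum fun k _ =>
            mul_le_mul_of_nonneg_right (hWlb i k) ((key s).1 k j)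
  have hhigh : (W ^ (s + 1)) i j ≤ c1 / (c0 * n) := by
    rw [hentry]
    calc ∑ k, W i k * (W ^ s) k j ≤ ∑ k, c1 / (c0 * n) * (W ^ s) k j :=
          Finset.sum_le_sum fun k _ =>
            mul_le_mul_of_nonneg_right (hWub i k) ((key s).1 k j)
      _ = c1 / (c0 * n) := by rw [← Finset.mul_sum, (key s).2 j, mul_one]
  -- compare with the stated bounds
  have hr1 : c0 ^ (s + 1) / (c1 ^ (s + 1) * n) ≤ c0 / (c1 * n) := by
    have h1 : c0 ^ (s + 1) / (c1 ^ (s + 1) * n) = (c0 / c1) ^ (s + 1) / n := by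
      rw [div_pow, div_div]
    have h2 : c0 / (c1 * n) = (c0 / c1) / n := by rw [div_div]
    rw [h1, h2]
    gcongr
    calc (c0 / c1) ^ (s + 1) ≤ (c0 / c1) ^ 1 :=
          pow_le_pow_of_le_one (by positivity) (div_le_one_of_le₀ hcc hc1.le)
            (Nat.one_le_iff_ne_zero.mpr (Nat.succ_ne_zero s))
      _ = c0 / c1 := pow_one _
  have hr2 : c1 / (c0 * n) ≤ c1 ^ (s + 1) / (c0 ^ (s + 1) * n) := by
    have h1 : c1 ^ (s + 1) / (c0 ^ (s + 1) * n) = (c1 / c0) ^ (s + 1) / n := by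
      rw [div_pow, div_div]
    have h2 : c1 / (c0 * n) = (c1 / c0) / n := by rw [div_div]
    rw [h1, h2]
    gcongr
    exact le_self_pow₀ ((one_le_div hc0).mpr hcc) (Nat.succ_ne_zero s)
  exact ⟨hr1.trans hlow, hhigh.trans hr2⟩
end

section
/- For any n×n real matrices A and P and any integer t ≥ 2, A^t − P^t = (A − P)^t + Σ_{c=0}^{t−1} Σ_{b=1}^{t−c−1} A^{t−c−b−1} (A − P) P^b (A − P)^c + Σ_{b'=1}^{t−1} P^{t−b'} (A − P)^{b'}. -/
/-!
Write `D = A - P`. The noncommutative telescoping identity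
`a ^ m - b ^ m = ∑ k < m, a ^ (m - k - 1) * (a - b) * b ^ k` evaluates the inner sum over `b`
(which lacks its `b = 0` term) as `A ^ (t - c - 1) * P * D ^ c - P ^ (t - c) * D ^ c`.
Since `P = A - D`, the same identity with `(a, b) = (A, D)` sums the first of these terms over `c`
to `A ^ t - D ^ t`.
-/

open Finset

theorem sum_range_eq_add_sum_Icc {M : Type*} [AddCommMonoid M] (f : ℕ → M) {m : ℕ} (hm : 0 < m) :
    ∑ k ∈ range m, f k = f 0 + ∑ k ∈ Icc 1 (m - 1), f k := by
  rw [sum_range_eq_add_Ico _ hm, Icc_sub_one_right_eq_Ico_of_not_isMin (by simpa using hm.ne')]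

theorem sum_range_pow_mul_sub_mul_pow {R : Type*} [Ring R] (a b : R) (m : ℕ) :
    ∑ k ∈ range m, a ^ (m - k - 1) * (a - b) * b ^ k = a ^ m - b ^ m := by
  have hterm : ∀ k ∈ range m, a ^ (m - k - 1) * (a - b) * b ^ k =
      a ^ (m - k) * b ^ k - a ^ (m - (k + 1)) * b ^ (k + 1) := by
    intro k hk
    rw [mem_range] at hk
    rw [show m - k = m - (k + 1) + 1 by omega, pow_succ, pow_succ']
    noncomm_ring
  rw [sum_congr rfl hterm, sum_range_sub']
  simp

theorem sum_Icc_pow_mul_sub_mul_pow {R : Type*} [Ring R] (a b : R) {m : ℕ} (hm : 0 < m) :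
    ∑ k ∈ Icc 1 (m - 1), a ^ (m - k - 1) * (a - b) * b ^ k = a ^ (m - 1) * b - b ^ m := by
  have h := sum_range_pow_mul_sub_mul_pow a b m
  rw [sum_range_eq_add_sum_Icc _ hm] at h
  rw [eq_sub_of_add_eq' h, ← Nat.sub_add_cancel hm, pow_succ]
  simp only [Nat.add_sub_cancel, Nat.sub_zero, pow_zero, mul_one]
  noncomm_ring

/-- For arbitrary square matrices `A, P` and `t ≥ 2`:
`A^t − P^t = (A−P)^t + Σ_{c=0}^{t−1} Σ_{b=1}^{t−c−1} A^{t−c−b−1}(A−P)P^b(A−P)^c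
  + Σ_{b'=1}^{t−1} P^{t−b'}(A−P)^{b'}`. -/
theorem stmt5 (n : ℕ) (A P : Matrix (Fin n) (Fin n) ℝ) (t : ℕ) (ht : 2 ≤ t) :
    A ^ t - P ^ t =
      (A - P) ^ t
      + ∑ c ∈ Finset.range t, ∑ b ∈ Finset.Icc 1 (t - c - 1),
          A ^ (t - c - b - 1) * (A - P) * P ^ b * (A - P) ^ c
      + ∑ b' ∈ Finset.Icc 1 (t - 1), P ^ (t - b') * (A - P) ^ b' := by
  have inner : ∀ c ∈ range t, ∑ b ∈ Icc 1 (t - c - 1),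
      A ^ (t - c - b - 1) * (A - P) * P ^ b * (A - P) ^ c =
        A ^ (t - c - 1) * P * (A - P) ^ c - P ^ (t - c) * (A - P) ^ c := by
    intro c hc
    rw [← sum_mul, sum_Icc_pow_mul_sub_mul_pow A P (by simpa using hc), sub_mul]
  have telescope : ∑ c ∈ range t, A ^ (t - c - 1) * P * (A - P) ^ c = A ^ t - (A - P) ^ t := by
    simpa using sum_range_pow_mul_sub_mul_pow A (A - P) t
  rw [sum_congr rfl inner, sum_sub_distrib, telescope,
    sum_range_eq_add_sum_Icc _ (by omega : 0 < t)]
  simp only [Nat.sub_zero, pow_zero, mul_one]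
  abel
end
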